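/- Let Z ∈ ℝ^{N×M}, K = Z Zᵀ, and let {v_j}_{j∈S} be an orthonormal family in ℝ^N with K v_j = λ_j v_j and λ_j > 0, such that the vectors {Zᵀ v_j}_{j∈S} span the row space of Z (the span of the training feature vectors). Set u_j = λ_j^{−1/2} Zᵀ v_j. Let Q ⊆ S index the retained principal components. Then for any w ∈ ℝ^M lying in the row space of Z, with kernel vector k_w = Z w, the squared reconstruction error of w with respect to the subspace spanned by {u_j}_{j∈Q} equals the kernel-evaluated norm of the projection onto the residual components: ‖w − Σ_{j∈Q} ⟨u_j, w⟩ u_j‖₂² = Σ_{j∈S∖Q} (v_jᵀ k_w)² / λ_j. -/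

import Mathlib

/-! Since `(Zᵀ v_i) ⬝ (Zᵀ v_j) = v_i ⬝ K v_j = λ_j δ_ij`, the vectors `u_j` are orthonormal, and
they span the row space of `Z`, so `w = Σ_j ⟨u_j, w⟩ u_j`. The reconstruction error is therefore
the squared norm of the tail `Σ_{j ∉ Q} ⟨u_j, w⟩ u_j`, which is `Σ_{j ∉ Q} ⟨u_j, w⟩²`, and
`⟨u_j, w⟩ = λ_j^{-1/2} v_jᵀ Z w = λ_j^{-1/2} v_jᵀ k_w`. -/

open Matrix
open scoped InnerProductSpace

section Orthonormal

variable {𝕜 E ι : Type*} [RCLike 𝕜] [NormedAddCommGroup E] [InnerProductSpace 𝕜 E]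
  {v : ι → E}

theorem Orthonormal.norm_sum_smul_sq (hv : Orthonormal 𝕜 v) (l : ι → 𝕜) (s : Finset ι) :
    ‖∑ i ∈ s, l i • v i‖ ^ 2 = ∑ i ∈ s, ‖l i‖ ^ 2 := by
  rw [@norm_sq_eq_re_inner 𝕜, hv.inner_sum, map_sum]
  refine Finset.sum_congr rfl fun i _ => ?_
  rw [RCLike.conj_mul, ← RCLike.ofReal_pow, RCLike.ofReal_re]

theorem Orthonormal.sum_inner_smul_eq_of_mem_span [Fintype ι] (hv : Orthonormal 𝕜 v) {x : E}
    (hx : x ∈ Submodule.span 𝕜 (Set.range v)) : ∑ i, ⟪v i, x⟫_𝕜 • v i = x := by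
  obtain ⟨c, rfl⟩ := (Submodule.mem_span_range_iff_exists_fun 𝕜).mp hx
  simp_rw [hv.inner_right_fintype]

theorem Orthonormal.norm_sub_sum_inner_smul_sq [Fintype ι] [DecidableEq ι] (hv : Orthonormal 𝕜 v)
    {x : E} (hx : x ∈ Submodule.span 𝕜 (Set.range v)) (s : Finset ι) :
    ‖x - ∑ i ∈ s, ⟪v i, x⟫_𝕜 • v i‖ ^ 2 = ∑ i ∈ sᶜ, ‖⟪v i, x⟫_𝕜‖ ^ 2 := by
  have hresidual : x - ∑ i ∈ s, ⟪v i, x⟫_𝕜 • v i = ∑ i ∈ sᶜ, ⟪v i, x⟫_𝕜 • v i := by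
    rw [sub_eq_iff_eq_add', Finset.sum_add_sum_compl, hv.sum_inner_smul_eq_of_mem_span hx]
  rw [hresidual, hv.norm_sum_smul_sq]

end Orthonormal

theorem Submodule.span_range_smul_of_ne_zero {K V ι : Type*} [Field K] [AddCommGroup V]
    [Module K V] {c : ι → K} (hc : ∀ i, c i ≠ 0) (v : ι → V) :
    Submodule.span K (Set.range fun i => c i • v i) = Submodule.span K (Set.range v) := by
  apply le_antisymm <;> rw [Submodule.span_le] <;> rintro _ ⟨i, rfl⟩
  · exact Submodule.smul_mem _ _ (Submodule.subset_span ⟨i, rfl⟩)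
  · rw [← inv_smul_smul₀ (hc i) (v i)]
    exact Submodule.smul_mem _ _ (Submodule.subset_span ⟨i, rfl⟩)

theorem WithLp.toLp_mem_span_range_toLp {p : ENNReal} {R V ι : Type*} [Semiring R]
    [AddCommGroup V] [Module R V] {u : ι → V} {x : V}
    (hx : x ∈ Submodule.span R (Set.range u)) :
    WithLp.toLp p x ∈ Submodule.span R (Set.range fun i => WithLp.toLp p (u i)) := by
  have := Submodule.apply_mem_span_image_of_mem_span (WithLp.linearEquiv p R V).symm.toLinearMap hx
  rwa [← Set.range_comp] at this

section KernelPCA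

variable {m n ι : Type*} [Fintype m] [Fintype n]

theorem Matrix.transpose_mulVec_dotProduct_transpose_mulVec (Z : Matrix m n ℝ) (x y : m → ℝ) :
    Zᵀ *ᵥ x ⬝ᵥ Zᵀ *ᵥ y = x ⬝ᵥ (Z * Zᵀ) *ᵥ y := by
  rw [← mulVec_mulVec, dotProduct_mulVec x Z, mulVec_transpose Z x]

theorem Matrix.orthonormal_toLp_inv_sqrt_smul_transpose_mulVec [DecidableEq ι] {Z : Matrix m n ℝ}
    {v : ι → m → ℝ} {lam : ι → ℝ} (hlam : ∀ j, 0 < lam j)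
    (heig : ∀ j, (Z * Zᵀ) *ᵥ v j = lam j • v j)
    (horth : ∀ i j, v i ⬝ᵥ v j = if i = j then 1 else 0) :
    Orthonormal ℝ fun j => WithLp.toLp 2 ((√(lam j))⁻¹ • Zᵀ *ᵥ v j) := by
  rw [orthonormal_iff_ite]
  intro i j
  rw [EuclideanSpace.inner_toLp_toLp, star_trivial, smul_dotProduct, dotProduct_smul,
    transpose_mulVec_dotProduct_transpose_mulVec, heig, dotProduct_smul, horth]
  by_cases hij : i = j
  · subst hij
    rw [if_pos rfl, smul_eq_mul, smul_eq_mul, smul_eq_mul, mul_one, ← mul_assoc,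
      ← mul_inv, Real.mul_self_sqrt (hlam i).le, inv_mul_cancel₀ (hlam i).ne']
  · simp [hij, Ne.symm hij]

end KernelPCA

/-- Given `K = Z Zᵀ` and an orthonormal family `{v_j}_{j∈S}` of eigenvectors
with positive eigenvalues such that `{Zᵀ v_j}` spans the row space of `Z`, with
`u_j = λ_j^{-1/2} Zᵀ v_j`, for any `w` in the row space of `Z` with kernel vector
`k_w = Z w` and any retained subset `Q ⊆ S`:
`‖w − Σ_{j∈Q} ⟨u_j, w⟩ u_j‖₂² = Σ_{j∈S∖Q} (v_jᵀ k_w)² / λ_j`. -/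
theorem stmt_7 (N M : ℕ) (Z : Matrix (Fin N) (Fin M) ℝ)
    (K : Matrix (Fin N) (Fin N) ℝ) (hK : K = Z * Zᵀ)
    (ι : Type*) [Fintype ι] [DecidableEq ι]
    (v : ι → (Fin N → ℝ)) (lam : ι → ℝ)
    (hlam : ∀ j, 0 < lam j)
    (heig : ∀ j, K.mulVec (v j) = lam j • v j)
    (horth : ∀ i j, v i ⬝ᵥ v j = if i = j then (1 : ℝ) else 0)
    (hspan : Submodule.span ℝ (Set.range fun j => Zᵀ.mulVec (v j)) =
      Submodule.span ℝ (Set.range fun i => Z i))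
    (u : ι → (Fin M → ℝ))
    (hu : ∀ j, u j = (Real.sqrt (lam j))⁻¹ • Zᵀ.mulVec (v j))
    (Q : Finset ι)
    (w : Fin M → ℝ) (hw : w ∈ Submodule.span ℝ (Set.range fun i => Z i))
    (kw : Fin N → ℝ) (hkw : kw = Z.mulVec w) :
    ‖(WithLp.equiv 2 (Fin M → ℝ)).symm (w - ∑ j ∈ Q, (u j ⬝ᵥ w) • u j)‖ ^ 2 =
      ∑ j ∈ Qᶜ, (v j ⬝ᵥ kw) ^ 2 / lam j := by
  have hu' : u = fun j => (√(lam j))⁻¹ • Zᵀ *ᵥ v j := funext hu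
  have hortho : Orthonormal ℝ fun j => WithLp.toLp 2 (u j) := by
    rw [hu']
    exact orthonormal_toLp_inv_sqrt_smul_transpose_mulVec hlam (hK ▸ heig) horth
  have hmem : WithLp.toLp 2 w ∈ Submodule.span ℝ (Set.range fun j => WithLp.toLp 2 (u j)) := by
    refine WithLp.toLp_mem_span_range_toLp ?_
    have hscale : ∀ j, (√(lam j))⁻¹ ≠ 0 := fun j =>
      (inv_pos.2 (Real.sqrt_pos.2 (hlam j))).ne'
    rwa [hu', Submodule.span_range_smul_of_ne_zero hscale, hspan]
  have hcoef : ∀ j, u j ⬝ᵥ w = (v j ⬝ᵥ kw) / √(lam j) := fun j => by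
    rw [hu, smul_dotProduct, mulVec_transpose, ← dotProduct_mulVec, hkw, smul_eq_mul,
      inv_mul_eq_div]
  calc ‖(WithLp.equiv 2 (Fin M → ℝ)).symm (w - ∑ j ∈ Q, (u j ⬝ᵥ w) • u j)‖ ^ 2
      = ‖WithLp.toLp 2 w -
          ∑ j ∈ Q, ⟪WithLp.toLp 2 (u j), WithLp.toLp 2 w⟫_ℝ • WithLp.toLp 2 (u j)‖ ^ 2 := by
        simp only [WithLp.equiv_symm_apply, WithLp.toLp_sub, WithLp.toLp_sum, WithLp.toLp_smul,
          EuclideanSpace.inner_toLp_toLp, star_trivial, dotProduct_comm w]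
    _ = ∑ j ∈ Qᶜ, ‖⟪WithLp.toLp 2 (u j), WithLp.toLp 2 w⟫_ℝ‖ ^ 2 :=
        hortho.norm_sub_sum_inner_smul_sq hmem Q
    _ = ∑ j ∈ Qᶜ, (v j ⬝ᵥ kw) ^ 2 / lam j := Finset.sum_congr rfl fun j _ => by
        rw [EuclideanSpace.inner_toLp_toLp, star_trivial, dotProduct_comm, hcoef, Real.norm_eq_abs,
          sq_abs, div_pow, Real.sq_sqrt (hlam j).le]
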